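/- arXiv:1706.01766 — 3 statements merged into one kernel-verified Lean document; each statement's English description precedes it below -/
import Mathlib

section
/- Let D ≥ 1 and N ≥ 1 and let γ₁,…,γ_D be N×N complex matrices satisfying the Euclidean Clifford relations γᵢγⱼ + γⱼγᵢ = −2δᵢⱼ·I. Then for any vectors B, C ∈ ℝ^D, with 𝒜ᵢ := Σⱼ (BⱼCᵢ − CⱼBᵢ)γⱼ, one has Σᵢ 𝒜ᵢ·𝒜ᵢ = −2(‖B‖²‖C‖² − ⟨B,C⟩²)·I. -/
/-!
Each `𝒜 i` is a combination `∑ j, x j • γ j` with real coefficients, and the Clifford relations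
give `(∑ j, x j • γ j) ^ 2 = -(∑ j, x j ^ 2) • 1`. Summing over `i` leaves Lagrange's identity
`∑ i, ∑ j, (B j * C i - C j * B i) ^ 2 = 2 * (‖B‖ ^ 2 * ‖C‖ ^ 2 - ⟪B, C⟫ ^ 2)`.
-/

open Finset

theorem mul_self_sum_smul_of_anticomm {R A ι : Type*} [CommRing R] [Invertible (2 : R)] [Ring A]
    [Algebra R A] [Fintype ι] [DecidableEq ι] {γ : ι → A}
    (hγ : ∀ i j, γ i * γ j + γ j * γ i = if i = j then (-2 : R) • (1 : A) else 0) (x : ι → R) :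
    (∑ j, x j • γ j) * (∑ j, x j • γ j) = -(∑ j, x j ^ 2) • (1 : A) := by
  have expand : (∑ j, x j • γ j) * (∑ j, x j • γ j) = ∑ j, ∑ k, (x j * x k) • (γ j * γ k) := by
    simp only [sum_mul_sum, smul_mul_smul_comm]
  refine (isUnit_of_invertible (2 : R)).smul_left_cancel.mp ?_
  calc (2 : R) • ((∑ j, x j • γ j) * (∑ j, x j • γ j))
      = ∑ j, ∑ k, (x j * x k) • (γ j * γ k + γ k * γ j) := by
        rw [two_smul, expand]
        nth_rw 2 [sum_comm]
        simp only [← sum_add_distrib, smul_add]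
        exact sum_congr rfl fun j _ => sum_congr rfl fun k _ => by rw [mul_comm (x k)]
    _ = ∑ j, (x j * x j) • (-2 : R) • (1 : A) := by
        simp only [hγ, smul_ite, smul_zero, sum_ite_eq, mem_univ, if_true]
    _ = (2 : R) • (-(∑ j, x j ^ 2) • (1 : A)) := by
        rw [← sum_smul, smul_smul, smul_smul]
        congr 1
        simp only [sq]
        ring

theorem sum_sum_mul_sub_mul_sq {R ι : Type*} [CommRing R] [Fintype ι] (b c : ι → R) :
    ∑ i, ∑ j, (b j * c i - c j * b i) ^ 2 =
      2 * ((∑ i, b i ^ 2) * (∑ i, c i ^ 2) - (∑ i, b i * c i) ^ 2) := by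
  have expand : ∀ i j, (b j * c i - c j * b i) ^ 2 =
      b j ^ 2 * c i ^ 2 + b i ^ 2 * c j ^ 2 - 2 * ((b i * c i) * (b j * c j)) := fun i j => by ring
  simp only [expand, sum_add_distrib, sum_sub_distrib, ← mul_sum, ← sum_mul, sq (∑ i, b i * c i)]
  ring

theorem EuclideanSpace.sum_sum_mul_sub_mul_sq {ι : Type*} [Fintype ι]
    (B C : EuclideanSpace ℝ ι) :
    ∑ i, ∑ j, (B j * C i - C j * B i) ^ 2 = 2 * (‖B‖ ^ 2 * ‖C‖ ^ 2 - inner ℝ B C ^ 2) := by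
  have hinner : inner ℝ B C = ∑ i, B i * C i := by
    simp [PiLp.inner_apply, mul_comm]
  rw [EuclideanSpace.real_norm_sq_eq, EuclideanSpace.real_norm_sq_eq, hinner,
    _root_.sum_sum_mul_sub_mul_sq]

theorem sum_sq_magnetic_potential_eq_general
    (D N : ℕ)
    (γ : Fin D → Matrix (Fin N) (Fin N) ℂ)
    (hγ : ∀ i j, γ i * γ j + γ j * γ i =
      if i = j then (-2 : ℂ) • (1 : Matrix (Fin N) (Fin N) ℂ) else 0)
    (B C : EuclideanSpace ℝ (Fin D))
    (𝒜 : Fin D → Matrix (Fin N) (Fin N) ℂ)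
    (h𝒜 : ∀ i, 𝒜 i = ∑ j, ((B j * C i - C j * B i : ℝ) : ℂ) • γ j) :
    ∑ i, 𝒜 i * 𝒜 i =
      ((-2 * (‖B‖ ^ 2 * ‖C‖ ^ 2 - (inner ℝ B C : ℝ) ^ 2) : ℝ) : ℂ) •
        (1 : Matrix (Fin N) (Fin N) ℂ) := by
  simp only [h𝒜, mul_self_sum_smul_of_anticomm hγ, ← sum_smul]
  rw [neg_mul, ← EuclideanSpace.sum_sum_mul_sub_mul_sq]
  push_cast
  rw [sum_neg_distrib]

/-- For γ-matrices satisfying the Euclidean Clifford relations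
γᵢγⱼ + γⱼγᵢ = −2δᵢⱼ·1, and vectors B, C ∈ ℝ^D, with 𝒜ᵢ := Σⱼ (BⱼCᵢ − CⱼBᵢ)γⱼ,
one has Σᵢ 𝒜ᵢ·𝒜ᵢ = −2(‖B‖²‖C‖² − ⟨B,C⟩²)·1. -/
theorem sum_sq_magnetic_potential_eq
    (D N : ℕ) (hD : 1 ≤ D) (hN : 1 ≤ N)
    (γ : Fin D → Matrix (Fin N) (Fin N) ℂ)
    (hγ : ∀ i j, γ i * γ j + γ j * γ i =
      if i = j then (-2 : ℂ) • (1 : Matrix (Fin N) (Fin N) ℂ) else 0)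
    (B C : EuclideanSpace ℝ (Fin D))
    (𝒜 : Fin D → Matrix (Fin N) (Fin N) ℂ)
    (h𝒜 : ∀ i, 𝒜 i = ∑ j, ((B j * C i - C j * B i : ℝ) : ℂ) • γ j) :
    ∑ i, 𝒜 i * 𝒜 i =
      ((-2 * (‖B‖ ^ 2 * ‖C‖ ^ 2 - (inner ℝ B C : ℝ) ^ 2) : ℝ) : ℂ) •
        (1 : Matrix (Fin N) (Fin N) ℂ) :=
  sum_sq_magnetic_potential_eq_general D N γ hγ B C 𝒜 h𝒜
end

section
/- Let ħ, κ, g > 0, let μ ∈ ℝ, and let u : ℝ → ℝ satisfy the Airy equation u''(x) = x·u(x) for all x ∈ ℝ. Set γ := (3g/(2ħκ))^{1/3} and δ := μ·(32/(9g²ħ⁴κ))^{1/3}, and define f(r) := u(γ·r − δ)/r for r > 0. Then for every r > 0, −(ħ²κ/2)·(f''(r) + (2/r)·f'(r)) + (3għ/4)·r·f(r) = μ·f(r). -/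
/-!
Writing `f = v / r` with `v r = u (γ r - δ)`, the three-dimensional radial Laplacian
`f'' + (2/r) f'` collapses to `v'' / r = γ² (γ r - δ) u (γ r - δ) / r` by the Airy equation.
The constants are chosen so that `(ħ²κ/2) γ³ = 3għ/4`, which cancels the linear potential,
and `(ħ²κ/2) γ² δ = μ`, which leaves exactly `μ f`.
-/

open Filter Topology

/-- The radial part of the Laplacian on `ℝ³`. -/
noncomputable def radialLaplacian (f : ℝ → ℝ) (r : ℝ) : ℝ :=
  deriv (deriv f) r + (2 / r) * deriv f r

lemma hasDerivAt_div_id {v : ℝ → ℝ} {v' s : ℝ} (hv : HasDerivAt v v' s) (hs : s ≠ 0) :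
    HasDerivAt (fun t => v t / t) (v' / s - v s / s ^ 2) s :=
  (hv.div (hasDerivAt_id' s) hs).congr_deriv (by field_simp)

lemma hasDerivAt_div_sq {v : ℝ → ℝ} {v' s : ℝ} (hv : HasDerivAt v v' s) (hs : s ≠ 0) :
    HasDerivAt (fun t => v t / t ^ 2) (v' / s ^ 2 - 2 * v s / s ^ 3) s :=
  (hv.div (hasDerivAt_pow 2 s) (pow_ne_zero 2 hs)).congr_deriv (by field_simp; ring)

lemma radialLaplacian_div_id {v : ℝ → ℝ} {r : ℝ} (hv : Differentiable ℝ v)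
    (hv' : DifferentiableAt ℝ (deriv v) r) (hr : r ≠ 0) :
    radialLaplacian (fun s => v s / s) r = deriv (deriv v) r / r := by
  have hderiv : deriv (fun s => v s / s) =ᶠ[𝓝 r] fun s => deriv v s / s - v s / s ^ 2 := by
    filter_upwards [eventually_ne_nhds hr] with s hs
    exact (hasDerivAt_div_id (hv s).hasDerivAt hs).deriv
  have hderiv2 : HasDerivAt (fun s => deriv v s / s - v s / s ^ 2) _ r :=
    (hasDerivAt_div_id hv'.hasDerivAt hr).sub (hasDerivAt_div_sq (hv r).hasDerivAt hr)
  rw [radialLaplacian, hderiv.deriv_eq, hderiv2.deriv, hderiv.eq_of_nhds]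
  field_simp
  ring

lemma deriv_comp_mul_sub (u : ℝ → ℝ) (γ δ : ℝ) :
    deriv (fun s => u (γ * s - δ)) = fun s => γ * deriv u (γ * s - δ) := by
  funext s
  rw [deriv_comp_mul_left (f := fun t => u (t - δ)), deriv_comp_sub_const, smul_eq_mul]

lemma rpow_one_div_three_pow_three {x : ℝ} (hx : 0 ≤ x) : (x ^ ((1 : ℝ) / 3)) ^ 3 = x := by
  simpa using Real.rpow_inv_natCast_pow hx three_ne_zero

lemma radialLaplacian_div_id_of_airy {u : ℝ → ℝ} (hu : Differentiable ℝ u)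
    (hu' : Differentiable ℝ (deriv u)) (hAiry : ∀ x, deriv (deriv u) x = x * u x)
    (γ δ : ℝ) {r : ℝ} (hr : r ≠ 0) :
    radialLaplacian (fun s => u (γ * s - δ) / s) r
      = γ ^ 2 * (γ * r - δ) * u (γ * r - δ) / r := by
  have haffine : Differentiable ℝ fun s : ℝ => γ * s - δ :=
    (differentiable_id.const_mul γ).sub_const δ
  have hv : Differentiable ℝ fun s => u (γ * s - δ) := hu.comp haffine
  have hv' : DifferentiableAt ℝ (deriv fun s => u (γ * s - δ)) r := by
    rw [deriv_comp_mul_sub]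
    exact ((hu'.comp haffine).const_mul γ) r
  rw [radialLaplacian_div_id hv hv' hr]
  simp only [deriv_comp_mul_sub, deriv_const_mul_field', hAiry]
  ring

/-- if u solves the Airy equation u'' = x·u, then
f(r) := u(γ·r − δ)/r with γ = (3g/(2ħκ))^{1/3} and δ = μ·(32/(9g²ħ⁴κ))^{1/3}
satisfies the D = 3 radial equation
−(ħ²κ/2)·(f'' + (2/r)·f') + (3għ/4)·r·f = μ·f for all r > 0. -/
theorem airy_solves_radial_D3_eigenvalue_problem
    (hb κ g : ℝ) (hhb : 0 < hb) (hκ : 0 < κ) (hg : 0 < g)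
    (μ : ℝ) (u : ℝ → ℝ)
    (hu : Differentiable ℝ u) (hu' : Differentiable ℝ (deriv u))
    (hAiry : ∀ x, deriv (deriv u) x = x * u x)
    (γ δ : ℝ)
    (hγ : γ = (3 * g / (2 * hb * κ)) ^ ((1 : ℝ) / 3))
    (hδ : δ = μ * (32 / (9 * g ^ 2 * hb ^ 4 * κ)) ^ ((1 : ℝ) / 3))
    (f : ℝ → ℝ) (hf : ∀ r, f r = u (γ * r - δ) / r) :
    ∀ r : ℝ, 0 < r →
      -(hb ^ 2 * κ / 2) * (deriv (deriv f) r + (2 / r) * deriv f r)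
        + (3 * g * hb / 4) * r * f r
      = μ * f r := by
  have hγ3 : γ ^ 3 = 3 * g / (2 * hb * κ) := hγ ▸ rpow_one_div_three_pow_three (by positivity)
  have hγδ : γ ^ 2 * δ = 2 * μ / (hb ^ 2 * κ) := by
    refine (Odd.pow_inj (n := 3) ⟨1, rfl⟩).mp ?_
    calc (γ ^ 2 * δ) ^ 3 = (γ ^ 3) ^ 2 * μ ^ 3 * 32 / (9 * g ^ 2 * hb ^ 4 * κ) := by
          rw [hδ, mul_pow, mul_pow, rpow_one_div_three_pow_three (by positivity)]; ring
      _ = (2 * μ / (hb ^ 2 * κ)) ^ 3 := by rw [hγ3]; field_simp; ring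
  intro r hr
  have hlap : radialLaplacian f r = γ ^ 2 * (γ * r - δ) * u (γ * r - δ) / r := by
    rw [show f = fun s => u (γ * s - δ) / s from funext hf]
    exact radialLaplacian_div_id_of_airy hu hu' hAiry γ δ hr.ne'
  have hcube : hb ^ 2 * κ * γ ^ 3 = 3 * g * hb / 2 := by rw [hγ3]; field_simp
  have hshift : hb ^ 2 * κ * (γ ^ 2 * δ) = 2 * μ := by rw [hγδ]; field_simp
  rw [← radialLaplacian, hlap, hf]
  field_simp
  linear_combination 4 * u (γ * r - δ) * hshift - 4 * r * u (γ * r - δ) * hcube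
end

section
/- Let D ≥ 1 and ħ, κ, g > 0. Then for every smooth compactly supported function ψ : ℝ^D × ℝ^D → ℂ of the variables (B, C), ∫ ( (ħ²κ/2)·(‖∇_B ψ‖² + ‖∇_C ψ‖²) + (g²/(8κ))·‖B‖²·‖C‖²·|ψ|² ) dB dC ≥ ∫ (D·g·ħ/4)·‖B‖·|ψ|² dB dC. -/
open scoped BigOperators
open MeasureTheory

noncomputable instance qpdl_haar (D : ℕ) :
    Measure.IsAddHaarMeasure
      (volume : Measure (EuclideanSpace ℝ (Fin D) × EuclideanSpace ℝ (Fin D))) :=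
  Measure.prod.instIsAddHaarMeasure _ _

private lemma qpdl_intg {D : ℕ}
    {f g : EuclideanSpace ℝ (Fin D) × EuclideanSpace ℝ (Fin D) → ℝ}
    (hf : Continuous f) (hg : Continuous g)
    (hcs : HasCompactSupport g) : Integrable (fun p => f p * g p) :=
  (hf.mul hg).integrable_of_hasCompactSupport hcs.mul_left

/-- AM-GM arithmetic core. -/
private lemma qpdl_amgm (hb κ g w c I m a : ℝ) (hhb : 0 < hb) (hκ : 0 < κ) (hg : 0 < g)
    (hw : 0 ≤ w) (ha : 0 ≤ a) (hm : 0 ≤ m) (hI : |I| ≤ m * a) :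
    -(g * hb / 4 * (w * c * (2 * I))) ≤
      hb ^ 2 * κ / 2 * a ^ 2 + g ^ 2 / (8 * κ) * (w ^ 2 * c ^ 2 * m ^ 2) := by
  have h8 : (0 : ℝ) < 8 * κ := by linarith
  rw [← mul_le_mul_iff_of_pos_right h8]
  have hdiv : g ^ 2 / (8 * κ) * (w ^ 2 * c ^ 2 * m ^ 2) * (8 * κ)
      = g ^ 2 * (w ^ 2 * c ^ 2 * m ^ 2) := by
    field_simp
  rw [add_mul, hdiv, ← sq_abs c]
  have habs : -(w * c * I) ≤ w * |c| * (m * a) := by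
    have h1 : |w * c * I| ≤ w * |c| * (m * a) := by
      rw [abs_mul, abs_mul, abs_of_nonneg hw]
      gcongr
    nlinarith [neg_abs_le (w * c * I)]
  have hpos : (0:ℝ) < 4 * (g * hb * κ) := by positivity
  have habs4 := mul_le_mul_of_nonneg_left habs hpos.le
  have hsq : (0:ℝ) ≤ (2 * hb * κ * a - g * (w * |c|) * m) ^ 2 := sq_nonneg _
  nlinarith [habs4, hsq]

set_option maxHeartbeats 1000000 in
/-- quadratic-form version of the estimate (est4):
∫ ((ħ²κ/2)(‖∇_Bψ‖² + ‖∇_Cψ‖²) + (g²/8κ)‖B‖²‖C‖²|ψ|²) dB dC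
  ≥ ∫ (Dgħ/4)‖B‖|ψ|² dB dC. -/
theorem quartic_potential_dominates_linear
    (D : ℕ) (hD : 1 ≤ D) (hb κ g : ℝ) (hhb : 0 < hb) (hκ : 0 < κ) (hg : 0 < g)
    (ψ : EuclideanSpace ℝ (Fin D) × EuclideanSpace ℝ (Fin D) → ℂ)
    (hψ : ContDiff ℝ (⊤ : ℕ∞) ψ) (hsupp : HasCompactSupport ψ) :
    (∫ p : EuclideanSpace ℝ (Fin D) × EuclideanSpace ℝ (Fin D),
        ((D : ℝ) * g * hb / 4) * ‖p.1‖ * ‖ψ p‖ ^ 2) ≤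
      ∫ p : EuclideanSpace ℝ (Fin D) × EuclideanSpace ℝ (Fin D),
        ((hb ^ 2 * κ / 2) *
            ((∑ i, ‖fderiv ℝ ψ p (EuclideanSpace.single i 1, 0)‖ ^ 2)
              + ∑ i, ‖fderiv ℝ ψ p (0, EuclideanSpace.single i 1)‖ ^ 2)
          + (g ^ 2 / (8 * κ)) * ‖p.1‖ ^ 2 * ‖p.2‖ ^ 2 * ‖ψ p‖ ^ 2) := by
  classical
  set N : EuclideanSpace ℝ (Fin D) × EuclideanSpace ℝ (Fin D) → ℝ :=
    fun p => ‖ψ p‖ ^ 2 with hN_def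
  -- basic facts about ψ and N
  have hψd : Differentiable ℝ ψ := hψ.differentiable (by simp)
  have hNcd : ContDiff ℝ (⊤ : ℕ∞) N := hψ.norm_sq ℝ
  have hNc : Continuous N := hNcd.continuous
  have hNd : Differentiable ℝ N := hNcd.differentiable (by simp)
  have hNcs : HasCompactSupport N := by
    have := hsupp.comp_left (g := fun z : ℂ => ‖z‖ ^ 2) (by simp)
    exact this
  have hNnn : ∀ p, 0 ≤ N p := fun p => by positivity
  -- derivative of N
  have hdN : ∀ p v, fderiv ℝ N p v = 2 * (inner ℝ (ψ p) (fderiv ℝ ψ p v) : ℝ) := by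
    intro p v
    have h := (hψd p).hasFDerivAt.norm_sq
    rw [hN_def, h.fderiv]
    simp [two_smul]
    ring
  have hGc : ∀ v, Continuous fun p => fderiv ℝ ψ p v :=
    fun v => ((hψ.fderiv_right (m := (⊤ : ℕ∞)) (by simp)).continuous).clm_apply continuous_const
  have hdNc : ∀ v, Continuous fun p => fderiv ℝ N p v :=
    fun v => ((hNcd.fderiv_right (m := (⊤ : ℕ∞)) (by simp)).continuous).clm_apply continuous_const
  have hdNcs : ∀ v, HasCompactSupport fun p => fderiv ℝ N p v := by
    intro v
    have := (hNcs.fderiv ℝ).comp_left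
      (g := fun L : (EuclideanSpace ℝ (Fin D) × EuclideanSpace ℝ (Fin D)) →L[ℝ] ℝ => L v)
      (by simp)
    exact this
  -- squared gradient norms: continuity and compact support
  have hG2c : ∀ v, Continuous fun p => ‖fderiv ℝ ψ p v‖ ^ 2 :=
    fun v => ((hGc v).norm).pow 2
  have hψfcs : HasCompactSupport (fderiv ℝ ψ) := hsupp.fderiv ℝ
  have hG2cs : ∀ v, HasCompactSupport fun p => ‖fderiv ℝ ψ p v‖ ^ 2 := by
    intro v
    apply HasCompactSupport.intro hψfcs
    intro p hp
    rw [image_eq_zero_of_notMem_tsupport hp]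
    simp
  -- coordinate projections
  have hcoordd : ∀ i : Fin D, Differentiable ℝ
      (fun p : EuclideanSpace ℝ (Fin D) × EuclideanSpace ℝ (Fin D) => p.2 i) := by
    intro i
    exact ((EuclideanSpace.proj i).comp
      (ContinuousLinearMap.snd ℝ (EuclideanSpace ℝ (Fin D)) (EuclideanSpace ℝ (Fin D)))).differentiable
  have hcoordc : ∀ i : Fin D, Continuous
      (fun p : EuclideanSpace ℝ (Fin D) × EuclideanSpace ℝ (Fin D) => p.2 i) :=
    fun i => (hcoordd i).continuous
  have hnorm2 : ∀ x : EuclideanSpace ℝ (Fin D), ‖x‖ ^ 2 = ∑ i, x i ^ 2 := by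
    intro x
    rw [EuclideanSpace.norm_eq, Real.sq_sqrt (by positivity)]
    simp [Real.norm_eq_abs, sq_abs]
  -- the integrand pieces
  set L : EuclideanSpace ℝ (Fin D) × EuclideanSpace ℝ (Fin D) → ℝ :=
    fun p => ((D : ℝ) * g * hb / 4) * ‖p.1‖ * N p with hL_def
  set R : EuclideanSpace ℝ (Fin D) × EuclideanSpace ℝ (Fin D) → ℝ :=
    fun p => ((hb ^ 2 * κ / 2) *
            ((∑ i, ‖fderiv ℝ ψ p (EuclideanSpace.single i 1, 0)‖ ^ 2)
              + ∑ i, ‖fderiv ℝ ψ p (0, EuclideanSpace.single i 1)‖ ^ 2)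
          + (g ^ 2 / (8 * κ)) * ‖p.1‖ ^ 2 * ‖p.2‖ ^ 2 * N p) with hR_def
  set T : EuclideanSpace ℝ (Fin D) × EuclideanSpace ℝ (Fin D) → ℝ :=
    fun p => (g ^ 2 / (8 * κ)) * (‖p.2‖ ^ 2 * N p) with hT_def
  have hsumBc : Continuous fun p : EuclideanSpace ℝ (Fin D) × EuclideanSpace ℝ (Fin D) =>
      (∑ i, ‖fderiv ℝ ψ p (EuclideanSpace.single i 1, 0)‖ ^ 2) :=
    continuous_finset_sum _ fun i _ => hG2c _
  have hsumCc : Continuous fun p : EuclideanSpace ℝ (Fin D) × EuclideanSpace ℝ (Fin D) =>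
      (∑ i, ‖fderiv ℝ ψ p (0, EuclideanSpace.single i 1)‖ ^ 2) :=
    continuous_finset_sum _ fun i _ => hG2c _
  have hsumBcs : HasCompactSupport fun p : EuclideanSpace ℝ (Fin D) × EuclideanSpace ℝ (Fin D) =>
      (∑ i, ‖fderiv ℝ ψ p (EuclideanSpace.single i 1, 0)‖ ^ 2) := by
    apply HasCompactSupport.intro hψfcs
    intro p hp
    rw [show fderiv ℝ ψ p = 0 from image_eq_zero_of_notMem_tsupport hp]
    simp
  have hsumCcs : HasCompactSupport fun p : EuclideanSpace ℝ (Fin D) × EuclideanSpace ℝ (Fin D) =>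
      (∑ i, ‖fderiv ℝ ψ p (0, EuclideanSpace.single i 1)‖ ^ 2) := by
    apply HasCompactSupport.intro hψfcs
    intro p hp
    rw [show fderiv ℝ ψ p = 0 from image_eq_zero_of_notMem_tsupport hp]
    simp
  -- integrability of the main integrands
  have hLint : Integrable L := by
    apply qpdl_intg (f := fun p => ((D : ℝ) * g * hb / 4) * ‖p.1‖) _ hNc hNcs
    exact continuous_const.mul (continuous_fst.norm)
  have hRint : Integrable R := by
    apply Integrable.add
    · apply (continuous_const.mul (hsumBc.add hsumCc)).integrable_of_hasCompactSupport
      exact (hsumBcs.add hsumCcs).mul_left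
    · apply qpdl_intg (f := fun p => (g ^ 2 / (8 * κ)) * ‖p.1‖ ^ 2 * ‖p.2‖ ^ 2) _ hNc hNcs
      exact ((continuous_const.mul (continuous_fst.norm.pow 2)).mul (continuous_snd.norm.pow 2))
  have hTint : Integrable T := by
    have := qpdl_intg (f := fun p : EuclideanSpace ℝ (Fin D) × EuclideanSpace ℝ (Fin D) =>
      (g ^ 2 / (8 * κ)) * ‖p.2‖ ^ 2) (continuous_const.mul (continuous_snd.norm.pow 2)) hNc hNcs
    simpa [hT_def, mul_assoc] using this
  have hTnn : 0 ≤ ∫ p, T p := by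
    apply integral_nonneg
    intro p
    simp only [Pi.zero_apply, hT_def]
    exact mul_nonneg (div_nonneg (sq_nonneg g) (by linarith))
      (mul_nonneg (sq_nonneg _) (hNnn p))
  -- MAIN ε-INEQUALITY
  have main : ∀ ε : ℝ, 0 < ε → (∫ p, L p) ≤ (∫ p, R p) + ε * ∫ p, T p := by
    intro ε hε
    set w : EuclideanSpace ℝ (Fin D) → ℝ := fun x => Real.sqrt (‖x‖ ^ 2 + ε) with hw_def
    have hwcd : ContDiff ℝ (⊤ : ℕ∞) w :=
      ((contDiff_norm_sq ℝ).add contDiff_const).sqrt (fun x => by positivity)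
    have hwc : Continuous w := hwcd.continuous
    have hwd : Differentiable ℝ w := hwcd.differentiable (by simp)
    have hwnn : ∀ x, 0 ≤ w x := fun x => Real.sqrt_nonneg _
    have hwsq : ∀ x, w x ^ 2 = ‖x‖ ^ 2 + ε := fun x => Real.sq_sqrt (by positivity)
    have hwge : ∀ x, ‖x‖ ≤ w x := by
      intro x
      rw [hw_def]
      have h1 : ‖x‖ = Real.sqrt (‖x‖ ^ 2) := (Real.sqrt_sq (norm_nonneg _)).symm
      rw [h1]
      exact Real.sqrt_le_sqrt (by nlinarith [hε.le])
    set vC : Fin D → EuclideanSpace ℝ (Fin D) × EuclideanSpace ℝ (Fin D) :=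
      fun i => (0, EuclideanSpace.single i 1) with hvC_def
    set fI : Fin D → (EuclideanSpace ℝ (Fin D) × EuclideanSpace ℝ (Fin D)) → ℝ :=
      fun i p => w p.1 * p.2 i with hfI_def
    have hwfst : Differentiable ℝ fun p : EuclideanSpace ℝ (Fin D) × EuclideanSpace ℝ (Fin D) =>
        w p.1 := hwd.comp differentiable_fst
    have hfId : ∀ i, Differentiable ℝ (fI i) := fun i => hwfst.mul (hcoordd i)
    have hfIc : ∀ i, Continuous (fI i) := fun i => (hfId i).continuous
    -- derivative of fI i in the direction vC i
    have hdfI : ∀ i p, fderiv ℝ (fI i) p (vC i) = w p.1 := by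
      intro i p
      set Lm : (EuclideanSpace ℝ (Fin D) × EuclideanSpace ℝ (Fin D)) →L[ℝ] ℝ :=
        (EuclideanSpace.proj i).comp (ContinuousLinearMap.snd ℝ _ _) with hLm
      have h1 : HasFDerivAt (fun q : EuclideanSpace ℝ (Fin D) × EuclideanSpace ℝ (Fin D) => w q.1)
          ((fderiv ℝ w p.1).comp (ContinuousLinearMap.fst ℝ _ _)) p :=
        (hwd p.1).hasFDerivAt.comp p hasFDerivAt_fst
      have h2 : HasFDerivAt
          (fun q : EuclideanSpace ℝ (Fin D) × EuclideanSpace ℝ (Fin D) => q.2 i) Lm p :=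
        Lm.hasFDerivAt
      have h3 := h1.mul h2
      rw [show fI i = ((fun q : EuclideanSpace ℝ (Fin D) × EuclideanSpace ℝ (Fin D) => w q.1) *
        fun q => q.2 i) from rfl, h3.fderiv]
      simp [hLm, hvC_def]
    -- integration by parts for each i
    have ibp : ∀ i, (∫ p, fI i p * fderiv ℝ N p (vC i)) = - ∫ p, w p.1 * N p := by
      intro i
      have hI5 : Integrable fun p => fderiv ℝ (fI i) p (vC i) * N p := by
        rw [show (fun p => fderiv ℝ (fI i) p (vC i) * N p) = fun p => w p.1 * N p by
          ext p; rw [hdfI i p]]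
        exact qpdl_intg (hwc.comp continuous_fst) hNc hNcs
      have hI4 : Integrable fun p => fI i p * fderiv ℝ N p (vC i) :=
        qpdl_intg (hfIc i) (hdNc _) (hdNcs _)
      have hI6 : Integrable fun p => fI i p * N p := qpdl_intg (hfIc i) hNc hNcs
      have h := integral_mul_fderiv_eq_neg_fderiv_mul_of_integrable hI5 hI4 hI6 (fun x _ => hfId i x) (fun x _ => hNd x)
      rw [h]
      congr 1
      apply integral_congr_ae
      filter_upwards with p
      rw [hdfI i p]
    -- the quadratic majorant
    set q : Fin D → (EuclideanSpace ℝ (Fin D) × EuclideanSpace ℝ (Fin D)) → ℝ :=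
      fun i p => hb ^ 2 * κ / 2 * ‖fderiv ℝ ψ p (vC i)‖ ^ 2
        + g ^ 2 / (8 * κ) * (w p.1 ^ 2 * (p.2 i) ^ 2 * N p) with hq_def
    have hqint : ∀ i, Integrable (q i) := by
      intro i
      apply Integrable.add
      · exact qpdl_intg (f := fun _ => hb ^ 2 * κ / 2) continuous_const (hG2c _) (hG2cs _)
      · apply qpdl_intg (f := fun p => g ^ 2 / (8 * κ) * (w p.1 ^ 2 * (p.2 i) ^ 2)) ?_ hNc hNcs
          |>.congr (Filter.EventuallyEq.of_eq ?_)
        · exact continuous_const.mul (((hwc.comp continuous_fst).pow 2).mul ((hcoordc i).pow 2))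
        · ext p; ring
    -- pointwise quadratic bound
    have hpt : ∀ i, ∀ p, -(g * hb / 4 * (fI i p * fderiv ℝ N p (vC i))) ≤ q i p := by
      intro i p
      rw [hdN p (vC i)]
      have hI := abs_real_inner_le_norm (ψ p) (fderiv ℝ ψ p (vC i))
      have key := qpdl_amgm hb κ g (w p.1) (p.2 i) (inner ℝ (ψ p) (fderiv ℝ ψ p (vC i)) : ℝ)
        ‖ψ p‖ ‖fderiv ℝ ψ p (vC i)‖ hhb hκ hg (hwnn _) (norm_nonneg _) (norm_nonneg _) hI
      have hNp : N p = ‖ψ p‖ ^ 2 := rfl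
      simp only [hq_def, hfI_def, hNp]
      nlinarith [key]
    -- integrability of the lower functions in the pointwise bound
    have hnegint : ∀ i, Integrable fun p => -(g * hb / 4 * (fI i p * fderiv ℝ N p (vC i))) := by
      intro i
      exact ((qpdl_intg (hfIc i) (hdNc _) (hdNcs _)).const_mul _).neg
    -- the C-part of R plus the ε-term
    set F : EuclideanSpace ℝ (Fin D) × EuclideanSpace ℝ (Fin D) → ℝ :=
      fun p => hb ^ 2 * κ / 2 * (∑ i, ‖fderiv ℝ ψ p (vC i)‖ ^ 2)
        + g ^ 2 / (8 * κ) * (‖p.1‖ ^ 2 * ‖p.2‖ ^ 2 * N p) with hF_def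
    have hFint : Integrable F := by
      apply Integrable.add
      · apply (continuous_const.mul hsumCc).integrable_of_hasCompactSupport hsumCcs.mul_left
      · apply qpdl_intg (f := fun p => g ^ 2 / (8 * κ) * (‖p.1‖ ^ 2 * ‖p.2‖ ^ 2)) ?_ hNc hNcs
          |>.congr (Filter.EventuallyEq.of_eq ?_)
        · exact continuous_const.mul ((continuous_fst.norm.pow 2).mul (continuous_snd.norm.pow 2))
        · ext p; ring
    have hc0 : (0:ℝ) ≤ (D : ℝ) * g * hb / 4 :=
      div_nonneg (mul_nonneg (mul_nonneg (Nat.cast_nonneg D) hg.le) hhb.le) (by norm_num)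
    calc (∫ p, L p)
        ≤ ∫ p, ((D : ℝ) * g * hb / 4) * (w p.1 * N p) := by
          apply integral_mono hLint
          · have := qpdl_intg (f := fun p => ((D : ℝ) * g * hb / 4) * w p.1)
              (continuous_const.mul (hwc.comp continuous_fst)) hNc hNcs
            simpa [mul_assoc] using this
          · intro p
            simp only [hL_def]
            have h1 : ((D : ℝ) * g * hb / 4) * ‖p.1‖ ≤ ((D : ℝ) * g * hb / 4) * w p.1 :=
              mul_le_mul_of_nonneg_left (hwge p.1) hc0
            have := hNnn p
            nlinarith [h1, hNnn p, mul_le_mul_of_nonneg_right h1 (hNnn p)]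
      _ = ∑ _i : Fin D, ∫ p, (g * hb / 4) * (w p.1 * N p) := by
          rw [Finset.sum_const, Finset.card_univ, Fintype.card_fin, nsmul_eq_mul]
          rw [← integral_const_mul]
          congr 1
          ext p
          ring
      _ = ∑ i : Fin D, ∫ p, -(g * hb / 4 * (fI i p * fderiv ℝ N p (vC i))) := by
          apply Finset.sum_congr rfl
          intro i _
          rw [integral_const_mul]
          rw [show (fun p => -(g * hb / 4 * (fI i p * fderiv ℝ N p (vC i))))
            = fun p => (-(g * hb / 4)) * (fI i p * fderiv ℝ N p (vC i)) by ext p; ring]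
          rw [integral_const_mul, ibp i]
          ring
      _ ≤ ∑ i : Fin D, ∫ p, q i p :=
          Finset.sum_le_sum fun i _ => integral_mono (hnegint i) (hqint i) (hpt i)
      _ = ∫ p, ∑ i : Fin D, q i p := (integral_finset_sum _ fun i _ => hqint i).symm
      _ = ∫ p, (F p + ε * T p) := by
          apply integral_congr_ae
          filter_upwards with p
          simp only [hq_def, hF_def, hT_def]
          rw [Finset.sum_add_distrib, ← Finset.mul_sum, ← Finset.mul_sum]
          have hs : ∑ i : Fin D, w p.1 ^ 2 * (p.2 i) ^ 2 * N p
              = w p.1 ^ 2 * ((∑ i, (p.2 i) ^ 2) * N p) := by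
            simp only [mul_assoc]
            rw [← Finset.mul_sum, ← Finset.sum_mul]
          rw [hs, ← hnorm2 p.2, hwsq p.1]
          ring
      _ = (∫ p, F p) + ε * ∫ p, T p := by
          rw [integral_add hFint (hTint.const_mul ε), integral_const_mul]
      _ ≤ (∫ p, R p) + ε * ∫ p, T p := by
          refine add_le_add ?_ le_rfl
          apply integral_mono hFint hRint
          intro p
          simp only [hF_def, hR_def, hvC_def]
          have hB0 : (0:ℝ) ≤ hb ^ 2 * κ / 2 *
              (∑ i, ‖fderiv ℝ ψ p (EuclideanSpace.single i 1, 0)‖ ^ 2) := by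
            apply mul_nonneg
            · positivity
            · exact Finset.sum_nonneg fun i _ => by positivity
          nlinarith [hB0]
  -- conclude by letting ε → 0
  refine le_of_forall_pos_le_add fun δ hδ => ?_
  have hden : (0:ℝ) < (∫ p, T p) + 1 := by linarith
  have hε : 0 < δ / ((∫ p, T p) + 1) := div_pos hδ hden
  calc (∫ p, L p) ≤ (∫ p, R p) + (δ / ((∫ p, T p) + 1)) * ∫ p, T p := main _ hε
    _ ≤ (∫ p, R p) + δ := by
        have h1 : (δ / ((∫ p, T p) + 1)) * ∫ p, T p ≤ δ := by
          rw [div_mul_eq_mul_div, div_le_iff₀ hden]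
          nlinarith
        linarith
end
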